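/- arXiv:2402.01070 — 4 statements merged into one kernel-verified Lean document; each statement's English description precedes it below -/
import Mathlib

section
/- Let K ≥ 1 and 0 ≤ I ≤ K. Let w^t ∈ ℝ^P, Δw_1, …, Δw_K ∈ ℝ^P, and define w^{t+1} = w^t + (1/K)·Σ_{k=1}^K Δw_k, m^t = (1/P)·⟨w^t, 𝟙⟩, m^{t+1} = (1/P)·⟨w^{t+1}, 𝟙⟩, and the shifted global model ŵ^{t+1} = w^{t+1} − (I/K)·m^{t+1}·𝟙. Define the round-to-round divergences D_FA = ‖w^{t+1} − w^t‖ and D_FS = ‖ŵ^{t+1} − w^t‖. Then D_FA² − D_FS² = (I·P/K)·((2 − I/K)·(m^{t+1})² − 2·m^{t+1}·m^t). -/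
/-!
Shifting by `c • 𝟙` only changes the squared distance through the cross term and the
term `c²‖𝟙‖²`: `‖u‖² - ‖u - c • 𝟙‖² = 2c⟪u, 𝟙⟫ - c²P`. With `u = w^{t+1} - w^t` the cross
term is `P (m^{t+1} - m^t)`, and `c = (I/K) m^{t+1}` turns this into the stated formula.
-/

open scoped RealInnerProductSpace

theorem norm_sq_sub_norm_sub_smul_sq {E : Type*} [NormedAddCommGroup E] [InnerProductSpace ℝ E]
    (u e : E) (c : ℝ) :
    ‖u‖ ^ 2 - ‖u - c • e‖ ^ 2 = 2 * c * ⟪u, e⟫ - c ^ 2 * ‖e‖ ^ 2 := by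
  rw [norm_sub_sq_real, inner_smul_right, norm_smul, mul_pow, Real.norm_eq_abs, sq_abs]
  ring

theorem EuclideanSpace.norm_sq_eq_card_of_forall_eq_one {ι : Type*} [Fintype ι]
    {ones : EuclideanSpace ℝ ι} (hones : ∀ i, ones i = 1) :
    ‖ones‖ ^ 2 = Fintype.card ι := by
  simp [EuclideanSpace.norm_sq_eq, hones]

/-- For `P = 0` the mean `(1/P) * ⟪w, 𝟙⟫` is the junk value `0`, but then `⟪w, 𝟙⟫ = 0` too. -/
theorem EuclideanSpace.card_mul_one_div_card_mul_inner {ι : Type*} [Fintype ι]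
    (w ones : EuclideanSpace ℝ ι) :
    (Fintype.card ι : ℝ) * ((1 / Fintype.card ι) * ⟪w, ones⟫) = ⟪w, ones⟫ := by
  rcases isEmpty_or_nonempty ι with hι | hι
  · simp [PiLp.inner_apply]
  · have : (Fintype.card ι : ℝ) ≠ 0 := by positivity
    field_simp

theorem fedshift_divergence_difference_general
    (P K I : ℕ)
    (wt : EuclideanSpace ℝ (Fin P))
    (ones : EuclideanSpace ℝ (Fin P)) (hones : ∀ p, ones p = 1)
    (wt1 : EuclideanSpace ℝ (Fin P))
    (mt mt1 : ℝ)
    (hmt : mt = (1 / (P : ℝ)) * ⟪wt, ones⟫)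
    (hmt1 : mt1 = (1 / (P : ℝ)) * ⟪wt1, ones⟫)
    (what1 : EuclideanSpace ℝ (Fin P))
    (hwhat1 : what1 = wt1 - (((I : ℝ) / K) * mt1) • ones)
    (DFA DFS : ℝ)
    (hDFA : DFA = ‖wt1 - wt‖)
    (hDFS : DFS = ‖what1 - wt‖) :
    DFA ^ 2 - DFS ^ 2
      = ((I : ℝ) * P / K) * ((2 - (I : ℝ) / K) * mt1 ^ 2 - 2 * mt1 * mt) := by
  have hshift : what1 - wt = (wt1 - wt) - (((I : ℝ) / K) * mt1) • ones := by
    rw [hwhat1]; abel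
  have hcross : ⟪wt1 - wt, ones⟫ = P * mt1 - P * mt := by
    have h := EuclideanSpace.card_mul_one_div_card_mul_inner (ι := Fin P)
    simp only [Fintype.card_fin] at h
    rw [inner_sub_left, hmt1, hmt, h, h]
  have hones_sq : ‖ones‖ ^ 2 = P := by
    simpa using EuclideanSpace.norm_sq_eq_card_of_forall_eq_one hones
  rw [hDFA, hDFS, hshift, norm_sq_sub_norm_sub_smul_sq, hcross, hones_sq]
  ring

/-- **Divergence comparison (Theorem 2 of the paper).**
`D_FA² − D_FS² = (I·P/K)·((2 − I/K)·(m^{t+1})² − 2·m^{t+1}·m^t)`. -/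
theorem fedshift_divergence_difference
    (P K I : ℕ) (hK : 1 ≤ K) (hIK : I ≤ K)
    (wt : EuclideanSpace ℝ (Fin P))
    (Δw : Fin K → EuclideanSpace ℝ (Fin P))
    (ones : EuclideanSpace ℝ (Fin P)) (hones : ∀ p, ones p = 1)
    (wt1 : EuclideanSpace ℝ (Fin P))
    (hwt1 : wt1 = wt + (K : ℝ)⁻¹ • ∑ k, Δw k)
    (mt mt1 : ℝ)
    (hmt : mt = (1 / (P : ℝ)) * ⟪wt, ones⟫)
    (hmt1 : mt1 = (1 / (P : ℝ)) * ⟪wt1, ones⟫)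
    (what1 : EuclideanSpace ℝ (Fin P))
    (hwhat1 : what1 = wt1 - (((I : ℝ) / K) * mt1) • ones)
    (DFA DFS : ℝ)
    (hDFA : DFA = ‖wt1 - wt‖)
    (hDFS : DFS = ‖what1 - wt‖) :
    DFA ^ 2 - DFS ^ 2
      = ((I : ℝ) * P / K) * ((2 - (I : ℝ) / K) * mt1 ^ 2 - 2 * mt1 * mt) :=
  fedshift_divergence_difference_general P K I wt ones hones wt1 mt mt1 hmt hmt1 what1 hwhat1 DFA
    DFS hDFA hDFS
end

section
/- Let N ≥ 1, let p_1, …, p_N ≥ 0 with Σ_{k=1}^N p_k = 1, let E ≥ 1 and G ≥ 0, let η : ℕ → ℝ be a nonincreasing sequence of nonnegative step sizes, let τ₀ ≤ τ be natural numbers with τ − τ₀ ≤ E − 1 and η_{τ₀} ≤ 2·η_τ, let w₀ ∈ ℝ^P, and for each client k and each step s with τ₀ ≤ s ≤ τ − 1 let g_k^s ∈ ℝ^P satisfy ‖g_k^s‖ ≤ G. Define w_k^τ = w₀ − Σ_{s=τ₀}^{τ−1} η_s·g_k^s and w̄^τ = Σ_{k=1}^N p_k·w_k^τ. Then Σ_{k=1}^N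 p_k·‖w̄^τ − w_k^τ‖² ≤ 4·η_τ²·(E − 1)²·G². -/
open Finset

/-! The local models differ from `w₀` by the accumulated steps `aₖ = ∑ η_s gₖˢ`, so their
deviations from the weighted average are the deviations of the `aₖ` from their weighted mean.
The weighted variance of the `aₖ` is at most their weighted second moment, and each `aₖ`
is a sum of at most `E - 1` steps of length at most `η_{τ₀} G ≤ 2 η_τ G`. -/

section WeightedMean

theorem Finset.sum_smul_sub_of_sum_eq_one {ι R M : Type*} [Ring R] [AddCommGroup M] [Module R M]
    {s : Finset ι} {p : ι → R} (hp : ∑ i ∈ s, p i = 1) (x : M) (a : ι → M) :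
    ∑ i ∈ s, p i • (x - a i) = x - ∑ i ∈ s, p i • a i := by
  simp only [smul_sub, sum_sub_distrib, ← sum_smul, hp, one_smul]

variable {ι E : Type*} [NormedAddCommGroup E] [InnerProductSpace ℝ E]
  {s : Finset ι} {p : ι → ℝ}

theorem Finset.sum_mul_norm_sub_weightedMean_sq (hp : ∑ i ∈ s, p i = 1) (a : ι → E) :
    ∑ i ∈ s, p i * ‖a i - ∑ j ∈ s, p j • a j‖ ^ 2
      = ∑ i ∈ s, p i * ‖a i‖ ^ 2 - ‖∑ j ∈ s, p j • a j‖ ^ 2 := by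
  set m := ∑ j ∈ s, p j • a j
  have hcross : ∑ i ∈ s, p i * inner ℝ (a i) m = ‖m‖ ^ 2 := by
    simp only [← real_inner_smul_left, ← sum_inner, m, real_inner_self_eq_norm_sq]
  simp only [norm_sub_sq_real, mul_add, mul_sub, sum_add_distrib, sum_sub_distrib,
    ← sum_mul, hp, mul_left_comm (p _) 2, ← mul_sum, hcross]
  ring

theorem Finset.sum_mul_norm_sub_weightedMean_sq_le (hp : ∑ i ∈ s, p i = 1) (a : ι → E) :
    ∑ i ∈ s, p i * ‖a i - ∑ j ∈ s, p j • a j‖ ^ 2 ≤ ∑ i ∈ s, p i * ‖a i‖ ^ 2 := by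
  rw [sum_mul_norm_sub_weightedMean_sq hp]
  exact sub_le_self _ (sq_nonneg _)

theorem Finset.sum_mul_norm_sub_weightedMean_sq_le_sq (hp₀ : ∀ i ∈ s, 0 ≤ p i)
    (hp : ∑ i ∈ s, p i = 1) {a : ι → E} {B : ℝ} (ha : ∀ i ∈ s, ‖a i‖ ≤ B) :
    ∑ i ∈ s, p i * ‖a i - ∑ j ∈ s, p j • a j‖ ^ 2 ≤ B ^ 2 :=
  calc _ ≤ ∑ i ∈ s, p i * ‖a i‖ ^ 2 := sum_mul_norm_sub_weightedMean_sq_le hp a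
    _ ≤ ∑ i ∈ s, p i * B ^ 2 := by
        gcongr with i hi
        · exact hp₀ i hi
        · exact ha i hi
    _ = B ^ 2 := by rw [← sum_mul, hp, one_mul]

end WeightedMean

theorem Finset.norm_sum_smul_le_card_mul {ι E : Type*} [SeminormedAddCommGroup E]
    [NormedSpace ℝ E] {s : Finset ι} {η : ι → ℝ} {g : ι → E} {c G : ℝ}
    (hη : ∀ i ∈ s, |η i| ≤ c) (hg : ∀ i ∈ s, ‖g i‖ ≤ G) :
    ‖∑ i ∈ s, η i • g i‖ ≤ #s * (c * G) := by
  rw [← nsmul_eq_mul, ← sum_const]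
  refine norm_sum_le_of_le s fun i hi => ?_
  rw [norm_smul, Real.norm_eq_abs]
  exact mul_le_mul (hη i hi) (hg i hi) (norm_nonneg _) ((abs_nonneg _).trans (hη i hi))

theorem local_model_divergence_bound_general
    (P N : ℕ)
    (p : Fin N → ℝ) (hp : ∀ k, 0 ≤ p k) (hpsum : ∑ k, p k = 1)
    (E : ℕ) (hE : 1 ≤ E) (G : ℝ) (hG : 0 ≤ G)
    (η : ℕ → ℝ) (hηnonneg : ∀ s, 0 ≤ η s) (hηanti : ∀ s t, s ≤ t → η t ≤ η s)
    (τ₀ τ : ℕ) (hblock : τ - τ₀ ≤ E - 1)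
    (hη2 : η τ₀ ≤ 2 * η τ)
    (w₀ : EuclideanSpace ℝ (Fin P))
    (g : Fin N → ℕ → EuclideanSpace ℝ (Fin P))
    (hg : ∀ k, ∀ s, τ₀ ≤ s → s ≤ τ - 1 → ‖g k s‖ ≤ G)
    (w : Fin N → EuclideanSpace ℝ (Fin P))
    (hw : ∀ k, w k = w₀ - ∑ s ∈ Finset.Ico τ₀ τ, η s • g k s)
    (wbar : EuclideanSpace ℝ (Fin P))
    (hwbar : wbar = ∑ k, p k • w k) :
    ∑ k, p k * ‖wbar - w k‖ ^ 2 ≤ 4 * (η τ) ^ 2 * ((E : ℝ) - 1) ^ 2 * G ^ 2 := by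
  set a := fun k => ∑ s ∈ Ico τ₀ τ, η s • g k s
  have hdev : ∀ k, wbar - w k = a k - ∑ j, p j • a j := fun k => by
    simp only [hwbar, hw, sum_smul_sub_of_sum_eq_one hpsum, sub_sub_sub_cancel_left, a]
  have hsteps : ((τ - τ₀ : ℕ) : ℝ) ≤ E - 1 := by
    simpa [Nat.cast_sub hE] using (Nat.cast_le (α := ℝ)).2 hblock
  have hstep : ∀ k, ‖a k‖ ≤ 2 * η τ * (E - 1) * G := fun k => by
    have hητ := hηnonneg τ
    calc ‖a k‖ ≤ #(Ico τ₀ τ) * (2 * η τ * G) := by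
          refine norm_sum_smul_le_card_mul (fun s hs => ?_) (fun s hs => ?_) <;>
            rw [mem_Ico] at hs
          · rw [abs_of_nonneg (hηnonneg s)]
            exact (hηanti τ₀ s hs.1).trans hη2
          · exact hg k s hs.1 (Nat.le_pred_of_lt hs.2)
      _ ≤ (E - 1) * (2 * η τ * G) := by
          rw [Nat.card_Ico]
          gcongr
      _ = 2 * η τ * (E - 1) * G := by ring
  calc ∑ k, p k * ‖wbar - w k‖ ^ 2 = ∑ k, p k * ‖a k - ∑ j, p j • a j‖ ^ 2 := by
        simp only [hdev]
    _ ≤ (2 * η τ * (E - 1) * G) ^ 2 :=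
        sum_mul_norm_sub_weightedMean_sq_le_sq (fun k _ => hp k) hpsum fun k _ => hstep k
    _ = 4 * (η τ) ^ 2 * ((E : ℝ) - 1) ^ 2 * G ^ 2 := by ring

/-- **Bounded divergence of local models (deterministic Lemma 3 of the paper).**
Within one block of at most `E` local steps started from the common model `w₀` at
synchronization step `τ₀`, the `p`-weighted squared divergence of the local models
from their average is at most `4·η_τ²·(E−1)²·G²`. -/
theorem local_model_divergence_bound
    (P N : ℕ) (hN : 1 ≤ N)
    (p : Fin N → ℝ) (hp : ∀ k, 0 ≤ p k) (hpsum : ∑ k, p k = 1)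
    (E : ℕ) (hE : 1 ≤ E) (G : ℝ) (hG : 0 ≤ G)
    (η : ℕ → ℝ) (hηnonneg : ∀ s, 0 ≤ η s) (hηanti : ∀ s t, s ≤ t → η t ≤ η s)
    (τ₀ τ : ℕ) (hτ₀τ : τ₀ ≤ τ) (hblock : τ - τ₀ ≤ E - 1)
    (hη2 : η τ₀ ≤ 2 * η τ)
    (w₀ : EuclideanSpace ℝ (Fin P))
    (g : Fin N → ℕ → EuclideanSpace ℝ (Fin P))
    (hg : ∀ k, ∀ s, τ₀ ≤ s → s ≤ τ - 1 → ‖g k s‖ ≤ G)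
    (w : Fin N → EuclideanSpace ℝ (Fin P))
    (hw : ∀ k, w k = w₀ - ∑ s ∈ Finset.Ico τ₀ τ, η s • g k s)
    (wbar : EuclideanSpace ℝ (Fin P))
    (hwbar : wbar = ∑ k, p k • w k) :
    ∑ k, p k * ‖wbar - w k‖ ^ 2 ≤ 4 * (η τ) ^ 2 * ((E : ℝ) - 1) ^ 2 * G ^ 2 :=
  local_model_divergence_bound_general P N p hp hpsum E hE G hG η hηnonneg hηanti τ₀ τ hblock hη2 w₀
    g hg w hw wbar hwbar
end

section
/- Let P ≥ 1, let N ≥ 1, let p_1, …, p_N ≥ 0 with Σ_{k=1}^N p_k = 1, and for each k let F_k : ℝ^P → ℝ be differentiable, μ-strongly convex, and L-smooth (its gradient is L-Lipschitz) with μ > 0 and L > 0. Let F = Σ_k p_k·F_k, let w* be a global minimizer of F, let w_k* be a global minimizer of F_k for each k, and set Γ = F(w*) − Σ_k p_k·F_k(w_k*). Let w_1, …, w_N ∈ ℝ^P, w̄ = Σ_k p_k·w_k, ḡ = Σ_k p_k·∇F_k(w_k), let 0 < η ≤ 1/(4L), let α, m ∈ ℝ, let ε > 0, and let 𝟙 ∈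 ℝ^P be the all-ones vector. Then ‖w̄ − η·ḡ − α·m·𝟙 − w*‖² ≤ (1 + 1/ε)·((1 − η·μ)·‖w̄ − w*‖² + 6·L·η²·Γ + 2·Σ_k p_k·‖w̄ − w_k‖²) + (1 + ε)·(α·m)²·P. -/
/-!
Expanding the square, the cross term of the averaged step is controlled client by client by
strong convexity of `F_k` at `w_k`, Jensen's inequality bounds `‖ḡ‖²` and `‖w̄ - w*‖²`, and the
descent lemma gives `‖∇F_k x‖² ≤ 2L (F_k x - F_k w_k*)`. The weighted optimality gap
`Σ p_k F_k(w_k) - F(w*)` may be negative; convexity at `w̄` bounds it below by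
`-(Σ p_k ‖w̄ - w_k‖² + 2Lη²Γ) / (2η)`, and `η ≤ 1/(4L)` makes the coefficients add up to `6Lη²Γ`.
The shift `α m 𝟙`, of squared norm `(α m)² P`, is split off by Young's inequality.
-/

open Finset
open scoped RealInnerProductSpace

theorem norm_sub_sq_le_young {E : Type*} [SeminormedAddCommGroup E] (a b : E) {ε : ℝ}
    (hε : 0 < ε) :
    ‖a - b‖ ^ 2 ≤ (1 + 1 / ε) * ‖a‖ ^ 2 + (1 + ε) * ‖b‖ ^ 2 := calc
  ‖a - b‖ ^ 2 ≤ (‖a‖ + ‖b‖) ^ 2 := by gcongr; exact norm_sub_le a b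
  _ = ‖a‖ ^ 2 + 2 * ‖a‖ * ‖b‖ + ‖b‖ ^ 2 := by ring
  _ ≤ ‖a‖ ^ 2 + (ε⁻¹ * ‖a‖ ^ 2 + ε⁻¹⁻¹ * ‖b‖ ^ 2) + ‖b‖ ^ 2 := by
    gcongr; exact two_mul_le_add_mul_sq (inv_pos.2 hε)
  _ = (1 + 1 / ε) * ‖a‖ ^ 2 + (1 + ε) * ‖b‖ ^ 2 := by rw [inv_inv]; ring

theorem two_mul_inner_le_sq_norm_add {E : Type*} [NormedAddCommGroup E] [InnerProductSpace ℝ E]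
    (a b : E) (η : ℝ) :
    2 * η * ⟪a, b⟫ ≤ ‖a‖ ^ 2 + η ^ 2 * ‖b‖ ^ 2 := by
  have h := norm_sub_sq_real a (η • b)
  rw [real_inner_smul_right, norm_smul, mul_pow, Real.norm_eq_abs, sq_abs] at h
  nlinarith [sq_nonneg ‖a - η • b‖]

section LipschitzGradient

variable {E : Type*} [NormedAddCommGroup E] [InnerProductSpace ℝ E] [CompleteSpace E]
  {f : E → ℝ} {f' : E → E} {L : ℝ}

theorem le_add_inner_add_sq_of_lipschitz_gradient (hf : ∀ x, HasGradientAt f (f' x) x)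
    (hf' : ∀ x y, ‖f' x - f' y‖ ≤ L * ‖x - y‖) (x y : E) :
    f y ≤ f x + ⟪y - x, f' x⟫ + L / 2 * ‖y - x‖ ^ 2 := by
  set d := y - x
  have hline (t : ℝ) : HasDerivAt (fun t : ℝ => f (x + t • d)) ⟪f' (x + t • d), d⟫ t := by
    have h := (hf (x + t • d)).hasFDerivAt.comp_hasDerivAt t
      (((hasDerivAt_id' t).smul_const d).const_add x)
    rwa [one_smul, InnerProductSpace.toDual_apply_apply] at h
  have hquad (t : ℝ) : HasDerivAt (fun t : ℝ => f x + t * ⟪d, f' x⟫ + L / 2 * t ^ 2 * ‖d‖ ^ 2)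
      (⟪d, f' x⟫ + L * t * ‖d‖ ^ 2) t :=
    ((((hasDerivAt_id' t).mul_const ⟪d, f' x⟫).const_add (f x)).add
      (((hasDerivAt_pow 2 t).const_mul (L / 2)).mul_const (‖d‖ ^ 2))).congr_deriv (by ring)
  have hslope : ∀ t ∈ Set.Ico (0 : ℝ) 1, ⟪f' (x + t • d), d⟫ ≤ ⟪d, f' x⟫ + L * t * ‖d‖ ^ 2 := by
    rintro t ⟨ht, -⟩
    have h : ⟪f' (x + t • d) - f' x, d⟫ ≤ L * t * ‖d‖ ^ 2 := calc
      _ ≤ ‖f' (x + t • d) - f' x‖ * ‖d‖ := real_inner_le_norm _ _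
      _ ≤ L * ‖t • d‖ * ‖d‖ := by gcongr; simpa using hf' (x + t • d) x
      _ = L * t * ‖d‖ ^ 2 := by rw [norm_smul, Real.norm_of_nonneg ht]; ring
    rw [inner_sub_left] at h
    linarith [real_inner_comm d (f' x)]
  have h := image_le_of_deriv_right_le_deriv_boundary
    (fun t _ => (hline t).continuousAt.continuousWithinAt)
    (fun t _ => (hline t).hasDerivWithinAt) (by simp)
    (fun t _ => (hquad t).continuousAt.continuousWithinAt)
    (fun t _ => (hquad t).hasDerivWithinAt) hslope (Set.right_mem_Icc.2 zero_le_one)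
  simpa [d] using h

theorem sq_norm_gradient_le_two_mul_sub_min (hf : ∀ x, HasGradientAt f (f' x) x)
    (hf' : ∀ x y, ‖f' x - f' y‖ ≤ L * ‖x - y‖) (hL : 0 < L) {z : E} (hz : ∀ x, f z ≤ f x)
    (x : E) : ‖f' x‖ ^ 2 ≤ 2 * L * (f x - f z) := by
  have h := le_add_inner_add_sq_of_lipschitz_gradient hf hf' x (x - L⁻¹ • f' x)
  rw [sub_sub_cancel_left, inner_neg_left, real_inner_smul_left, real_inner_self_eq_norm_sq,
    norm_neg, norm_smul, mul_pow, Real.norm_of_nonneg (inv_nonneg.2 hL.le)] at h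
  have hdecrease :
      -(L⁻¹ * ‖f' x‖ ^ 2) + L / 2 * (L⁻¹ ^ 2 * ‖f' x‖ ^ 2) = -(L⁻¹ * ‖f' x‖ ^ 2) / 2 := by
    field_simp; ring
  have hmin := hz (x - L⁻¹ • f' x)
  calc ‖f' x‖ ^ 2 = L * (L⁻¹ * ‖f' x‖ ^ 2) := by field_simp
    _ ≤ L * (2 * (f x - f z)) := mul_le_mul_of_nonneg_left (by linarith) hL.le
    _ = 2 * L * (f x - f z) := by ring

end LipschitzGradient

theorem sq_norm_sum_smul_le {ι E : Type*} [Fintype ι] [NormedAddCommGroup E]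
    [InnerProductSpace ℝ E] {p : ι → ℝ} (hp : ∀ k, 0 ≤ p k) (hpsum : ∑ k, p k = 1)
    (v : ι → E) : ‖∑ k, p k • v k‖ ^ 2 ≤ ∑ k, p k * ‖v k‖ ^ 2 :=
  (convexOn_univ_norm.pow (fun _ _ => norm_nonneg _) 2).map_sum_le (fun k _ => hp k) hpsum
    fun _ _ => Set.mem_univ _

theorem EuclideanSpace.sq_norm_eq_card_of_forall_eq_one {ι : Type*} [Fintype ι]
    {x : EuclideanSpace ℝ ι} (hx : ∀ i, x i = 1) : ‖x‖ ^ 2 = Fintype.card ι := by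
  simp [EuclideanSpace.real_norm_sq_eq, hx]

section WeightedClients

variable {ι E : Type*} [Fintype ι] [NormedAddCommGroup E]
  {p : ι → ℝ} {F : ι → E → ℝ} {F' : ι → E → E} {w : ι → E} {L μ η : ℝ}

theorem sum_mul_sq_norm_le_two_mul_sum_sub {v : ι → E} (hp : ∀ k, 0 ≤ p k)
    (hgsq : ∀ k x, ‖F' k x‖ ^ 2 ≤ 2 * L * (F k x - F k (v k))) (x : ι → E) :
    ∑ k, p k * ‖F' k (x k)‖ ^ 2 ≤ 2 * L * (∑ k, p k * F k (x k) - ∑ k, p k * F k (v k)) := calc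
  _ ≤ ∑ k, p k * (2 * L * (F k (x k) - F k (v k))) :=
    Finset.sum_le_sum fun k _ => mul_le_mul_of_nonneg_left (hgsq k (x k)) (hp k)
  _ = _ := by
    simp only [mul_sub, Finset.mul_sum, ← Finset.sum_sub_distrib]
    exact Finset.sum_congr rfl fun k _ => by ring

variable [InnerProductSpace ℝ E]

theorem neg_two_mul_inner_le_of_strongConvex {f : E → ℝ} {g u v z : E} (hη : 0 ≤ η)
    (hsc : f z ≥ f v + ⟪z - v, g⟫ + μ / 2 * ‖z - v‖ ^ 2) :
    -(2 * η * ⟪u - z, g⟫)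
      ≤ ‖u - v‖ ^ 2 + η ^ 2 * ‖g‖ ^ 2 + 2 * η * (f z - f v) - η * μ * ‖v - z‖ ^ 2 := by
  have hamgm := two_mul_inner_le_sq_norm_add (v - u) g η
  have hsplit : ⟪u - z, g⟫ = -⟪v - u, g⟫ - ⟪z - v, g⟫ := by
    rw [← inner_neg_left, ← inner_sub_left]; congr 1; abel
  rw [norm_sub_rev v u] at hamgm
  rw [norm_sub_rev v z]
  nlinarith [mul_le_mul_of_nonneg_left hsc hη]

theorem neg_two_mul_inner_sum_smul_le (hp : ∀ k, 0 ≤ p k) (hη : 0 ≤ η)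
    (hsc : ∀ k x y, F k x ≥ F k y + ⟪x - y, F' k y⟫ + μ / 2 * ‖x - y‖ ^ 2) (u z : E) :
    -(2 * η * ⟪u - z, ∑ k, p k • F' k (w k)⟫)
      ≤ ∑ k, p k * ‖u - w k‖ ^ 2 + η ^ 2 * ∑ k, p k * ‖F' k (w k)‖ ^ 2
        + 2 * η * (∑ k, p k * F k z - ∑ k, p k * F k (w k))
        - η * μ * ∑ k, p k * ‖w k - z‖ ^ 2 := calc
  _ = ∑ k, p k * -(2 * η * ⟪u - z, F' k (w k)⟫) := by
    simp only [inner_sum, real_inner_smul_right, Finset.mul_sum]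
    rw [← Finset.sum_neg_distrib]
    exact Finset.sum_congr rfl fun k _ => by ring
  _ ≤ ∑ k, p k * (‖u - w k‖ ^ 2 + η ^ 2 * ‖F' k (w k)‖ ^ 2
        + 2 * η * (F k z - F k (w k)) - η * μ * ‖w k - z‖ ^ 2) :=
    Finset.sum_le_sum fun k _ => mul_le_mul_of_nonneg_left
      (neg_two_mul_inner_le_of_strongConvex hη (hsc k z (w k))) (hp k)
  _ = _ := by
    simp only [Finset.mul_sum, ← Finset.sum_add_distrib, ← Finset.sum_sub_distrib]
    exact Finset.sum_congr rfl fun k _ => by ring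

theorem two_mul_sum_sub_le_of_convex (hp : ∀ k, 0 ≤ p k) (hη : 0 ≤ η)
    (hconv : ∀ k x y, F k x ≥ F k y + ⟪x - y, F' k y⟫) (u : E) :
    2 * η * (∑ k, p k * F k u - ∑ k, p k * F k (w k))
      ≤ ∑ k, p k * ‖u - w k‖ ^ 2 + η ^ 2 * ∑ k, p k * ‖F' k u‖ ^ 2 := calc
  _ = ∑ k, p k * (2 * η * (F k u - F k (w k))) := by
    simp only [Finset.mul_sum, ← Finset.sum_sub_distrib]
    exact Finset.sum_congr rfl fun k _ => by ring
  _ ≤ ∑ k, p k * (‖u - w k‖ ^ 2 + η ^ 2 * ‖F' k u‖ ^ 2) := by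
    refine Finset.sum_le_sum fun k _ => mul_le_mul_of_nonneg_left ?_ (hp k)
    have hgap : F k u - F k (w k) ≤ ⟪u - w k, F' k u⟫ := by
      have h := hconv k (w k) u
      rw [← neg_sub, inner_neg_left] at h
      linarith
    nlinarith [two_mul_inner_le_sq_norm_add (u - w k) (F' k u) η]
  _ = _ := by
    simp only [Finset.mul_sum, ← Finset.sum_add_distrib]
    exact Finset.sum_congr rfl fun k _ => by ring

theorem sq_norm_avg_step_sub_le (hp : ∀ k, 0 ≤ p k) (hpsum : ∑ k, p k = 1) (hμ : 0 ≤ μ)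
    (hη : 0 ≤ η) (hsc : ∀ k x y, F k x ≥ F k y + ⟪x - y, F' k y⟫ + μ / 2 * ‖x - y‖ ^ 2)
    (z : E) :
    ‖∑ k, p k • w k - η • ∑ k, p k • F' k (w k) - z‖ ^ 2
      ≤ (1 - η * μ) * ‖∑ k, p k • w k - z‖ ^ 2 + ∑ k, p k * ‖∑ j, p j • w j - w k‖ ^ 2
        + (2 * η ^ 2 * ∑ k, p k * ‖F' k (w k)‖ ^ 2
          + 2 * η * (∑ k, p k * F k z - ∑ k, p k * F k (w k))) := by
  set u := ∑ k, p k • w k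
  set g := ∑ k, p k • F' k (w k)
  have hexpand : ‖u - η • g - z‖ ^ 2 = ‖u - z‖ ^ 2 - 2 * η * ⟪u - z, g⟫ + η ^ 2 * ‖g‖ ^ 2 := by
    rw [sub_right_comm, norm_sub_sq_real, real_inner_smul_right, norm_smul, mul_pow,
      Real.norm_eq_abs, sq_abs]
    ring
  have hinner := neg_two_mul_inner_sum_smul_le (w := w) hp hη hsc u z
  have hg : ‖g‖ ^ 2 ≤ ∑ k, p k * ‖F' k (w k)‖ ^ 2 := sq_norm_sum_smul_le hp hpsum _
  have hu : ‖u - z‖ ^ 2 ≤ ∑ k, p k * ‖w k - z‖ ^ 2 := by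
    have hcentered : u - z = ∑ k, p k • (w k - z) := by
      simp only [u, smul_sub, Finset.sum_sub_distrib, ← Finset.sum_smul, hpsum, one_smul]
    rw [hcentered]
    exact sq_norm_sum_smul_le hp hpsum _
  nlinarith [mul_le_mul_of_nonneg_left hg (sq_nonneg η),
    mul_le_mul_of_nonneg_left hu (mul_nonneg hη hμ)]

theorem gradient_terms_le_drift_add_heterogeneity {v : ι → E} (hp : ∀ k, 0 ≤ p k)
    (hconv : ∀ k x y, F k x ≥ F k y + ⟪x - y, F' k y⟫)
    (hgsq : ∀ k x, ‖F' k x‖ ^ 2 ≤ 2 * L * (F k x - F k (v k)))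
    {z : E} (hz : ∀ x, ∑ k, p k * F k z ≤ ∑ k, p k * F k x)
    (hL : 0 < L) (hη : 0 < η) (hηL : η ≤ 1 / (4 * L)) (u : E) :
    2 * η ^ 2 * ∑ k, p k * ‖F' k (w k)‖ ^ 2
        + 2 * η * (∑ k, p k * F k z - ∑ k, p k * F k (w k))
      ≤ ∑ k, p k * ‖u - w k‖ ^ 2
        + 6 * L * η ^ 2 * (∑ k, p k * F k z - ∑ k, p k * F k (v k)) := by
  have hgw := sum_mul_sq_norm_le_two_mul_sum_sub hp hgsq w
  have hgu := sum_mul_sq_norm_le_two_mul_sum_sub hp hgsq fun _ => u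
  have hdrift := two_mul_sum_sub_le_of_convex (w := w) hp hη.le hconv u
  have hzu := hz u
  set S := ∑ k, p k * ‖u - w k‖ ^ 2
  set Fw := ∑ k, p k * F k (w k)
  set Fs := ∑ k, p k * F k z
  set Fks := ∑ k, p k * F k (v k)
  have hΓ : 0 ≤ Fs - Fks := by
    have h := sum_mul_sq_norm_le_two_mul_sum_sub hp hgsq fun _ => z
    have h0 : 0 ≤ ∑ k, p k * ‖F' k z‖ ^ 2 :=
      Finset.sum_nonneg fun k _ => mul_nonneg (hp k) (sq_nonneg _)
    nlinarith
  have hLη : 4 * L * η ≤ 1 := by rwa [le_div_iff₀ (by positivity), mul_comm] at hηL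
  have hgap : -(S + 2 * L * η ^ 2 * (Fs - Fks)) ≤ 2 * η * (Fw - Fs) := by
    nlinarith [mul_le_mul_of_nonneg_left hgu (sq_nonneg η),
      mul_nonneg (by nlinarith : 0 ≤ 2 * η - 2 * L * η ^ 2) (sub_nonneg.2 hzu)]
  calc 2 * η ^ 2 * ∑ k, p k * ‖F' k (w k)‖ ^ 2 + 2 * η * (Fs - Fw)
      ≤ 4 * L * η ^ 2 * (Fs - Fks) - (1 - 2 * L * η) * (2 * η * (Fw - Fs)) := by
        nlinarith [mul_le_mul_of_nonneg_left hgw (by positivity : (0 : ℝ) ≤ 2 * η ^ 2)]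
    _ ≤ 4 * L * η ^ 2 * (Fs - Fks) + (1 - 2 * L * η) * (S + 2 * L * η ^ 2 * (Fs - Fks)) := by
        nlinarith [mul_le_mul_of_nonneg_left hgap (by linarith : 0 ≤ 1 - 2 * L * η)]
    _ ≤ S + 6 * L * η ^ 2 * (Fs - Fks) := by
        have hS : 0 ≤ S := Finset.sum_nonneg fun k _ => mul_nonneg (hp k) (sq_nonneg _)
        nlinarith [mul_nonneg (by positivity : (0 : ℝ) ≤ 2 * L * η) (add_nonneg hS
          (mul_nonneg (by positivity : (0 : ℝ) ≤ 2 * L * η ^ 2) hΓ))]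

end WeightedClients

theorem fedshift_one_step_recursion_general
    (P N : ℕ)
    (p : Fin N → ℝ) (hp : ∀ k, 0 ≤ p k) (hpsum : ∑ k, p k = 1)
    (μ L : ℝ) (hμ : 0 < μ) (hL : 0 < L)
    (F : Fin N → EuclideanSpace ℝ (Fin P) → ℝ)
    (F' : Fin N → EuclideanSpace ℝ (Fin P) → EuclideanSpace ℝ (Fin P))
    (hgrad : ∀ k x, HasGradientAt (F k) (F' k x) x)
    (hsc : ∀ k x y, F k x ≥ F k y + ⟪x - y, F' k y⟫ + μ / 2 * ‖x - y‖ ^ 2)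
    (hsmooth : ∀ k x y, ‖F' k x - F' k y‖ ≤ L * ‖x - y‖)
    (wstar : EuclideanSpace ℝ (Fin P))
    (hwstar : ∀ x, ∑ k, p k * F k wstar ≤ ∑ k, p k * F k x)
    (wkstar : Fin N → EuclideanSpace ℝ (Fin P))
    (hwkstar : ∀ k x, F k (wkstar k) ≤ F k x)
    (Γ : ℝ) (hΓ : Γ = (∑ k, p k * F k wstar) - ∑ k, p k * F k (wkstar k))
    (w : Fin N → EuclideanSpace ℝ (Fin P))
    (wbar : EuclideanSpace ℝ (Fin P)) (hwbar : wbar = ∑ k, p k • w k)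
    (gbar : EuclideanSpace ℝ (Fin P)) (hgbar : gbar = ∑ k, p k • F' k (w k))
    (η : ℝ) (hηpos : 0 < η) (hη : η ≤ 1 / (4 * L))
    (α m : ℝ) (ε : ℝ) (hε : 0 < ε)
    (ones : EuclideanSpace ℝ (Fin P)) (hones : ∀ q, ones q = 1) :
    ‖wbar - η • gbar - (α * m) • ones - wstar‖ ^ 2
      ≤ (1 + 1 / ε) * ((1 - η * μ) * ‖wbar - wstar‖ ^ 2 + 6 * L * η ^ 2 * Γ
            + 2 * ∑ k, p k * ‖wbar - w k‖ ^ 2)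
        + (1 + ε) * (α * m) ^ 2 * P := by
  have hconv : ∀ k x y, F k x ≥ F k y + ⟪x - y, F' k y⟫ := fun k x y => by
    nlinarith [hsc k x y, sq_nonneg ‖x - y‖]
  have hgsq : ∀ k x, ‖F' k x‖ ^ 2 ≤ 2 * L * (F k x - F k (wkstar k)) := fun k =>
    sq_norm_gradient_le_two_mul_sub_min (hgrad k) (hsmooth k) hL (hwkstar k)
  have hstep : ‖wbar - η • gbar - wstar‖ ^ 2 ≤ (1 - η * μ) * ‖wbar - wstar‖ ^ 2
      + 6 * L * η ^ 2 * Γ + 2 * ∑ k, p k * ‖wbar - w k‖ ^ 2 := by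
    subst hwbar hgbar hΓ
    linarith [sq_norm_avg_step_sub_le (w := w) hp hpsum hμ.le hηpos.le hsc wstar,
      gradient_terms_le_drift_add_heterogeneity (w := w) hp hconv hgsq hwstar hL hηpos hη
        (∑ k, p k • w k)]
  have hshift : ‖(α * m) • ones‖ ^ 2 = (α * m) ^ 2 * P := by
    rw [norm_smul, mul_pow, Real.norm_eq_abs, sq_abs,
      EuclideanSpace.sq_norm_eq_card_of_forall_eq_one hones, Fintype.card_fin]
  calc ‖wbar - η • gbar - (α * m) • ones - wstar‖ ^ 2
      = ‖(wbar - η • gbar - wstar) - (α * m) • ones‖ ^ 2 := by rw [sub_right_comm]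
    _ ≤ (1 + 1 / ε) * ‖wbar - η • gbar - wstar‖ ^ 2 + (1 + ε) * ‖(α * m) • ones‖ ^ 2 :=
      norm_sub_sq_le_young _ _ hε
    _ ≤ _ := by
      rw [hshift, mul_assoc (1 + ε)]
      gcongr

/-- **One-step recursion of FedShift (deterministic Lemma 1 of the paper).**
For `μ`-strongly convex, `L`-smooth local objectives `F_k` with minimizers `w_k*`,
global objective `F = Σ_k p_k F_k` with minimizer `w*`, heterogeneity
`Γ = F(w*) − Σ_k p_k F_k(w_k*)`, step size `0 < η ≤ 1/(4L)`, and shift `α·m·𝟙`,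
the shifted averaged step satisfies the stated bound. -/
theorem fedshift_one_step_recursion
    (P N : ℕ) (hP : 1 ≤ P) (hN : 1 ≤ N)
    (p : Fin N → ℝ) (hp : ∀ k, 0 ≤ p k) (hpsum : ∑ k, p k = 1)
    (μ L : ℝ) (hμ : 0 < μ) (hL : 0 < L)
    (F : Fin N → EuclideanSpace ℝ (Fin P) → ℝ)
    (F' : Fin N → EuclideanSpace ℝ (Fin P) → EuclideanSpace ℝ (Fin P))
    (hgrad : ∀ k x, HasGradientAt (F k) (F' k x) x)
    (hsc : ∀ k x y, F k x ≥ F k y + ⟪x - y, F' k y⟫ + μ / 2 * ‖x - y‖ ^ 2)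
    (hsmooth : ∀ k x y, ‖F' k x - F' k y‖ ≤ L * ‖x - y‖)
    (wstar : EuclideanSpace ℝ (Fin P))
    (hwstar : ∀ x, ∑ k, p k * F k wstar ≤ ∑ k, p k * F k x)
    (wkstar : Fin N → EuclideanSpace ℝ (Fin P))
    (hwkstar : ∀ k x, F k (wkstar k) ≤ F k x)
    (Γ : ℝ) (hΓ : Γ = (∑ k, p k * F k wstar) - ∑ k, p k * F k (wkstar k))
    (w : Fin N → EuclideanSpace ℝ (Fin P))
    (wbar : EuclideanSpace ℝ (Fin P)) (hwbar : wbar = ∑ k, p k • w k)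
    (gbar : EuclideanSpace ℝ (Fin P)) (hgbar : gbar = ∑ k, p k • F' k (w k))
    (η : ℝ) (hηpos : 0 < η) (hη : η ≤ 1 / (4 * L))
    (α m : ℝ) (ε : ℝ) (hε : 0 < ε)
    (ones : EuclideanSpace ℝ (Fin P)) (hones : ∀ q, ones q = 1) :
    ‖wbar - η • gbar - (α * m) • ones - wstar‖ ^ 2
      ≤ (1 + 1 / ε) * ((1 - η * μ) * ‖wbar - wstar‖ ^ 2 + 6 * L * η ^ 2 * Γ
            + 2 * ∑ k, p k * ‖wbar - w k‖ ^ 2)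
        + (1 + ε) * (α * m) ^ 2 * P :=
  fedshift_one_step_recursion_general P N p hp hpsum μ L hμ hL F F' hgrad hsc hsmooth wstar hwstar
    wkstar hwkstar Γ hΓ w wbar hwbar gbar hgbar η hηpos hη α m ε hε ones hones
end

section
/- Let ε, β, γ, μ > 0, B₁, B₂, M ≥ 0, υ ≥ 0, let τ ≥ 1 be a natural number, set η = β/(τ + γ), and let Δ_τ, Δ_{τ+1} ≥ 0 be real numbers. Assume: (i) Δ_{τ+1} ≤ (1 + 1/ε)·(1 − η·μ)·Δ_τ + B₁·η² + B₂·M; (ii) Δ_τ ≤ υ/(τ + γ); (iii) 1 − η·μ ≥ 0; and (iv) (1 − (1 + 1/ε)·β·μ + (1/ε)·(τ + γ))·υ + B₁·β² + B₂·M·(τ + γ)² ≤ 0. Then Δ_{τ+1} ≤ υ/(τ + γ + 1). -/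
/-! With `t = τ + γ`, substituting `η = β / t` and the invariant `Δ_τ ≤ υ / t` into the recursion
bounds `Δ_{τ+1}` by `N / t²`, where `N = (1 + 1/ε)(t − βμ)υ + B₁β² + B₂Mt²`. Condition (iv) says
precisely `N ≤ (t − 1)υ`, and `(t − 1)/t² ≤ 1/(t + 1)` because `(t − 1)(t + 1) = t² − 1`. -/

lemma sub_one_mul_div_sq_le_div_add_one {t υ : ℝ} (ht : 0 < t) (hυ : 0 ≤ υ) :
    (t - 1) * υ / t ^ 2 ≤ υ / (t + 1) := by
  rw [div_le_div_iff₀ (by positivity) (by linarith)]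
  nlinarith

lemma recursion_bound_eq_div_sq {t : ℝ} (ht : t ≠ 0) (c β μ υ B₁ K : ℝ) :
    c * (1 - β / t * μ) * (υ / t) + B₁ * (β / t) ^ 2 + K
      = (c * (t - β * μ) * υ + B₁ * β ^ 2 + K * t ^ 2) / t ^ 2 := by
  field_simp

theorem fedshift_induction_step_general
    (ε β γ μ B₁ B₂ M υ : ℝ)
    (hε : 0 < ε) (hγ : 0 < γ) (hυ : 0 ≤ υ)
    (τ : ℕ)
    (η : ℝ) (hη : η = β / ((τ : ℝ) + γ))
    (Δτ Δτ1 : ℝ)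
    (hrec : Δτ1 ≤ (1 + 1 / ε) * (1 - η * μ) * Δτ + B₁ * η ^ 2 + B₂ * M)
    (hinv : Δτ ≤ υ / ((τ : ℝ) + γ))
    (hstep : 0 ≤ 1 - η * μ)
    (hneg : (1 - (1 + 1 / ε) * β * μ + (1 / ε) * ((τ : ℝ) + γ)) * υ
              + B₁ * β ^ 2 + B₂ * M * ((τ : ℝ) + γ) ^ 2 ≤ 0) :
    Δτ1 ≤ υ / ((τ : ℝ) + γ + 1) := by
  set t : ℝ := (τ : ℝ) + γ
  have ht : 0 < t := by positivity
  subst hη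
  calc Δτ1 ≤ (1 + 1 / ε) * (1 - β / t * μ) * (υ / t) + B₁ * (β / t) ^ 2 + B₂ * M :=
        hrec.trans (by gcongr)
    _ = ((1 + 1 / ε) * (t - β * μ) * υ + B₁ * β ^ 2 + B₂ * M * t ^ 2) / t ^ 2 :=
        recursion_bound_eq_div_sq ht.ne' _ _ _ _ _ _
    _ ≤ (t - 1) * υ / t ^ 2 := by gcongr; linear_combination hneg
    _ ≤ υ / (t + 1) := sub_one_mul_div_sq_le_div_add_one ht hυ

/-- **Single induction step in the convergence proof of Theorem 1.**
If `Δ_{τ+1} ≤ (1+1/ε)(1−ημ)Δ_τ + B₁η² + B₂M` with `η = β/(τ+γ)`, the invariant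
`Δ_τ ≤ υ/(τ+γ)` holds, `1 − ημ ≥ 0`, and
`(1 − (1+1/ε)βμ + (1/ε)(τ+γ))·υ + B₁β² + B₂M(τ+γ)² ≤ 0`,
then `Δ_{τ+1} ≤ υ/(τ+γ+1)`. -/
theorem fedshift_induction_step
    (ε β γ μ B₁ B₂ M υ : ℝ)
    (hε : 0 < ε) (hβ : 0 < β) (hγ : 0 < γ) (hμ : 0 < μ)
    (hB₁ : 0 ≤ B₁) (hB₂ : 0 ≤ B₂) (hM : 0 ≤ M) (hυ : 0 ≤ υ)
    (τ : ℕ) (hτ : 1 ≤ τ)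
    (η : ℝ) (hη : η = β / ((τ : ℝ) + γ))
    (Δτ Δτ1 : ℝ) (hΔτ : 0 ≤ Δτ) (hΔτ1 : 0 ≤ Δτ1)
    (hrec : Δτ1 ≤ (1 + 1 / ε) * (1 - η * μ) * Δτ + B₁ * η ^ 2 + B₂ * M)
    (hinv : Δτ ≤ υ / ((τ : ℝ) + γ))
    (hstep : 0 ≤ 1 - η * μ)
    (hneg : (1 - (1 + 1 / ε) * β * μ + (1 / ε) * ((τ : ℝ) + γ)) * υ
              + B₁ * β ^ 2 + B₂ * M * ((τ : ℝ) + γ) ^ 2 ≤ 0) :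
    Δτ1 ≤ υ / ((τ : ℝ) + γ + 1) :=
  fedshift_induction_step_general ε β γ μ B₁ B₂ M υ hε hγ hυ τ η hη Δτ Δτ1 hrec hinv hstep hneg
end
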